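/- Let p ∈ [1,∞] and let F : ℝ_{≥0} → ℝ_{≥0} be an increasing bijection (a reparameterization) which is continuous and differentiable with bounded derivative F'. Then for all persistence diagrams D, D' (finite multisets of points in V = {(a,b) ∈ ℝ_{≥0}² : a ≤ b}), one has W_p(F(D), F(D')) ≤ (sup F') · W_p(D, D'), where F(D) denotes the persistence diagram obtained by replacing each point (a,b) of D with (F(a), F(b)). -/

import Mathlib

open scoped ENNReal BigOperators

/-- The `p`-norm distance between two points of the plane, valued in `ℝ≥0∞`
(`p = ∞` gives the sup-norm). -/
noncomputable def dp (p : ℝ≥0∞) (x y : ℝ × ℝ) : ℝ≥0∞ :=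
  if p = ∞ then max (ENNReal.ofReal |x.1 - y.1|) (ENNReal.ofReal |x.2 - y.2|)
  else (ENNReal.ofReal |x.1 - y.1| ^ p.toReal + ENNReal.ofReal |x.2 - y.2| ^ p.toReal)
      ^ (1 / p.toReal)

/-- Distance (in the `p`-norm) from a point to the diagonal `Δ = {(z,z) : z ≥ 0}`. -/
noncomputable def dDelta (p : ℝ≥0∞) (x : ℝ × ℝ) : ℝ≥0∞ :=
  ⨅ z ∈ Set.Ici (0 : ℝ), dp p x (z, z)

/-- A persistence diagram: a finite (multi)family of points of the plane. -/
structure PD where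
  m : ℕ
  pts : Fin m → ℝ × ℝ

/-- Validity: all points lie in `V = {(a,b) : 0 ≤ a ≤ b}`. -/
def PD.valid (D : PD) : Prop := ∀ i, 0 ≤ (D.pts i).1 ∧ (D.pts i).1 ≤ (D.pts i).2

/-- Applying a reparameterization `F` to each coordinate of each point of a diagram. -/
noncomputable def PD.map (F : ℝ → ℝ) (D : PD) : PD :=
  ⟨D.m, fun i => (F (D.pts i).1, F (D.pts i).2)⟩

/-- The `p`-norm of a finite family of values in `ℝ≥0∞` (`p = ∞` gives the max). -/
noncomputable def pNormE (p : ℝ≥0∞) {ι : Type} (s : Finset ι) (f : ι → ℝ≥0∞) : ℝ≥0∞ :=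
  if p = ∞ then s.sup f else (∑ i ∈ s, f i ^ p.toReal) ^ (1 / p.toReal)

/-- The `p`-norm of a triple of values in `ℝ≥0∞`. -/
noncomputable def pNorm3 (p : ℝ≥0∞) (u v w : ℝ≥0∞) : ℝ≥0∞ :=
  if p = ∞ then max u (max v w)
  else (u ^ p.toReal + v ^ p.toReal + w ^ p.toReal) ^ (1 / p.toReal)

/-- The `p`-Wasserstein distance between persistence diagrams: the infimum, over all
partial injective matchings `α : I → {1,…,n}` (`I ⊆ {1,…,m}`), of the `p`-norm of the
triple (cost of matched points, cost of unmatched points of `D` to the diagonal,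
cost of unmatched points of `D'` to the diagonal). -/
noncomputable def Wdist (p : ℝ≥0∞) (D D' : PD) : ℝ≥0∞ :=
  ⨅ (I : Finset (Fin D.m)) (α : ↥I → Fin D'.m) (_ : Function.Injective α),
    pNorm3 p
      (pNormE p Finset.univ (fun i : ↥I => dp p (D.pts i.1) (D'.pts (α i))))
      (pNormE p Iᶜ (fun i => dDelta p (D.pts i)))
      (pNormE p (Finset.univ.image α)ᶜ (fun j => dDelta p (D'.pts j)))

/-!
Since `F` is increasing with `F' ≤ L := sup F'`, the mean value theorem makes `F` an
`L`-Lipschitz map of `[0, ∞)`, and `L ≠ 0` because `F` is injective. Hence `F` scales the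
`p`-distance between two points of `V` by at most `L`, and, since `F` maps the diagonal into
itself, also the `p`-distance of a point to the diagonal. A matching between `D` and `D'` is a
matching between `F(D)` and `F(D')`, and both `p`-norms in its cost are monotone and
homogeneous, so its cost grows by a factor at most `L`; taking the infimum gives the claim.
-/

open Set
open scoped NNReal

theorem ENNReal.rpow_sum_rpow_le_mul {ι : Type*} {r : ℝ} (hr : 0 < r) (s : Finset ι)
    {f g : ι → ℝ≥0∞} {C : ℝ≥0∞} (h : ∀ i ∈ s, g i ≤ C * f i) :
    (∑ i ∈ s, g i ^ r) ^ (1 / r) ≤ C * (∑ i ∈ s, f i ^ r) ^ (1 / r) :=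
  calc (∑ i ∈ s, g i ^ r) ^ (1 / r)
      ≤ (∑ i ∈ s, (C * f i) ^ r) ^ (1 / r) := by
        gcongr with i hi
        exact h i hi
    _ = (C ^ r * ∑ i ∈ s, f i ^ r) ^ (1 / r) := by
        simp only [ENNReal.mul_rpow_of_nonneg _ _ hr.le, Finset.mul_sum]
    _ = C * (∑ i ∈ s, f i ^ r) ^ (1 / r) := by
        rw [ENNReal.mul_rpow_of_nonneg _ _ (by positivity), ← ENNReal.rpow_mul,
          mul_one_div_cancel hr.ne', ENNReal.rpow_one]

section PNorm

variable {p : ℝ≥0∞}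

theorem pNormE_le_mul (hp : p ≠ 0) {ι : Type} (s : Finset ι) {f g : ι → ℝ≥0∞} {C : ℝ≥0∞}
    (h : ∀ i ∈ s, g i ≤ C * f i) : pNormE p s g ≤ C * pNormE p s f := by
  unfold pNormE
  split_ifs with hinf
  · exact Finset.sup_le fun i hi => (h i hi).trans (by gcongr; exact Finset.le_sup hi)
  · exact ENNReal.rpow_sum_rpow_le_mul (ENNReal.toReal_pos hp hinf) s h

theorem pNorm3_le_mul (hp : p ≠ 0) {u v w u' v' w' C : ℝ≥0∞}
    (hu : u' ≤ C * u) (hv : v' ≤ C * v) (hw : w' ≤ C * w) :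
    pNorm3 p u' v' w' ≤ C * pNorm3 p u v w := by
  unfold pNorm3
  split_ifs with hinf
  · rw [mul_max, mul_max]
    exact max_le_max hu (max_le_max hv hw)
  · simpa [Fin.sum_univ_three, Fin.forall_fin_succ] using
      ENNReal.rpow_sum_rpow_le_mul (ENNReal.toReal_pos hp hinf) Finset.univ
        (f := ![u, v, w]) (g := ![u', v', w']) (C := C) (by simp [Fin.forall_fin_succ, *])

theorem dp_le_mul (hp : p ≠ 0) {x y x' y' : ℝ × ℝ} {C : ℝ≥0∞}
    (h₁ : ENNReal.ofReal |x'.1 - y'.1| ≤ C * ENNReal.ofReal |x.1 - y.1|)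
    (h₂ : ENNReal.ofReal |x'.2 - y'.2| ≤ C * ENNReal.ofReal |x.2 - y.2|) :
    dp p x' y' ≤ C * dp p x y := by
  unfold dp
  split_ifs with hinf
  · rw [mul_max]
    exact max_le_max h₁ h₂
  · simpa [Fin.sum_univ_two] using
      ENNReal.rpow_sum_rpow_le_mul (ENNReal.toReal_pos hp hinf) Finset.univ
        (f := ![ENNReal.ofReal |x.1 - y.1|, ENNReal.ofReal |x.2 - y.2|])
        (g := ![ENNReal.ofReal |x'.1 - y'.1|, ENNReal.ofReal |x'.2 - y'.2|]) (C := C)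
        (by simp [Fin.forall_fin_two, *])

end PNorm

theorem MonotoneOn.lipschitzOnWith_of_hasDerivAt_le {f f' : ℝ → ℝ} {s : Set ℝ} {K : ℝ≥0}
    (hf : MonotoneOn f s) (hs : Convex ℝ s) (hderiv : ∀ x ∈ s, HasDerivAt f (f' x) x)
    (hle : ∀ x ∈ s, f' x ≤ K) : LipschitzOnWith K f s := by
  have hcont : ContinuousOn f s := fun x hx => (hderiv x hx).continuousAt.continuousWithinAt
  have hdiff : DifferentiableOn ℝ f (interior s) := fun x hx =>
    (hderiv x (interior_subset hx)).differentiableAt.differentiableWithinAt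
  have hle' : ∀ x ∈ interior s, deriv f x ≤ K := fun x hx =>
    (hderiv x (interior_subset hx)).deriv ▸ hle x (interior_subset hx)
  refine LipschitzOnWith.of_le_add_mul K fun x hx y hy => ?_
  rcases le_total x y with hxy | hyx
  · have hfxy : f x ≤ f y := hf hx hy hxy
    have hdist : 0 ≤ (K : ℝ) * dist x y := by positivity
    linarith
  · have := hs.image_sub_le_mul_sub_of_deriv_le hcont hdiff hle' y hy x hx hyx
    rw [Real.dist_eq, abs_of_nonneg (sub_nonneg.2 hyx)]
    linarith

theorem LipschitzOnWith.ne_zero_of_injOn {α β : Type*} [PseudoEMetricSpace α] [EMetricSpace β]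
    {f : α → β} {s : Set α} {K : ℝ≥0}
    (hf : LipschitzOnWith K f s) (hinj : InjOn f s) (hs : s.Nontrivial) : K ≠ 0 := by
  rintro rfl
  obtain ⟨x, hx, y, hy, hxy⟩ := hs
  exact hxy (hinj hx hy ((LipschitzOnWith.zero_iff f).1 hf x hx y hy))

section Reparam

variable {p : ℝ≥0∞} {f : ℝ → ℝ} {K : ℝ≥0}

theorem LipschitzOnWith.ofReal_abs_sub_le {s : Set ℝ} (hf : LipschitzOnWith K f s)
    {a b : ℝ} (ha : a ∈ s) (hb : b ∈ s) :
    ENNReal.ofReal |f a - f b| ≤ K * ENNReal.ofReal |a - b| := by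
  simpa only [edist_dist, Real.dist_eq] using hf ha hb

theorem LipschitzOnWith.dp_map_le (hp : p ≠ 0) {s : Set ℝ} (hf : LipschitzOnWith K f s)
    {x y : ℝ × ℝ} (hx₁ : x.1 ∈ s) (hx₂ : x.2 ∈ s) (hy₁ : y.1 ∈ s) (hy₂ : y.2 ∈ s) :
    dp p (f x.1, f x.2) (f y.1, f y.2) ≤ K * dp p x y :=
  dp_le_mul hp (hf.ofReal_abs_sub_le hx₁ hy₁) (hf.ofReal_abs_sub_le hx₂ hy₂)

theorem LipschitzOnWith.dDelta_map_le (hp : p ≠ 0) (hf : LipschitzOnWith K f (Ici (0 : ℝ)))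
    (hK : K ≠ 0) (hmaps : MapsTo f (Ici (0 : ℝ)) (Ici (0 : ℝ))) {x : ℝ × ℝ} (hx₁ : 0 ≤ x.1)
    (hx₂ : 0 ≤ x.2) :
    dDelta p (f x.1, f x.2) ≤ K * dDelta p x := by
  simp only [dDelta, ENNReal.mul_iInf_of_ne (ENNReal.coe_ne_zero.2 hK) ENNReal.coe_ne_top]
  refine le_iInf₂ fun z hz => ?_
  calc ⨅ w ∈ Ici (0 : ℝ), dp p (f x.1, f x.2) (w, w)
      ≤ dp p (f x.1, f x.2) (f z, f z) := iInf₂_le (f z) (hmaps hz)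
    _ ≤ K * dp p x (z, z) := hf.dp_map_le (y := (z, z)) hp hx₁ hx₂ hz hz

theorem Wdist_map_le_of_le_mul (hp : p ≠ 0) {F : ℝ → ℝ} {C : ℝ≥0∞} (hC₀ : C ≠ 0) (hC : C ≠ ∞)
    (D D' : PD)
    (hdp : ∀ i j, dp p ((D.map F).pts i) ((D'.map F).pts j) ≤ C * dp p (D.pts i) (D'.pts j))
    (hΔ : ∀ i, dDelta p ((D.map F).pts i) ≤ C * dDelta p (D.pts i))
    (hΔ' : ∀ j, dDelta p ((D'.map F).pts j) ≤ C * dDelta p (D'.pts j)) :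
    Wdist p (D.map F) (D'.map F) ≤ C * Wdist p D D' := by
  simp only [Wdist, ENNReal.mul_iInf_of_ne hC₀ hC]
  exact iInf_mono fun I => iInf_mono fun α => iInf_mono fun _ => pNorm3_le_mul hp
    (pNormE_le_mul hp _ fun i _ => hdp i.1 (α i)) (pNormE_le_mul hp _ fun i _ => hΔ i)
    (pNormE_le_mul hp _ fun j _ => hΔ' j)

theorem PD.valid.nonneg {D : PD} (hD : D.valid) (i : Fin D.m) :
    0 ≤ (D.pts i).1 ∧ 0 ≤ (D.pts i).2 :=
  ⟨(hD i).1, (hD i).1.trans (hD i).2⟩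

theorem LipschitzOnWith.Wdist_map_le (hp : p ≠ 0) (hf : LipschitzOnWith K f (Ici (0 : ℝ)))
    (hK : K ≠ 0) (hmaps : MapsTo f (Ici (0 : ℝ)) (Ici (0 : ℝ))) {D D' : PD} (hD : D.valid)
    (hD' : D'.valid) :
    Wdist p (D.map f) (D'.map f) ≤ K * Wdist p D D' :=
  Wdist_map_le_of_le_mul hp (ENNReal.coe_ne_zero.2 hK) ENNReal.coe_ne_top D D'
    (fun i j => hf.dp_map_le hp (hD.nonneg i).1 (hD.nonneg i).2 (hD'.nonneg j).1 (hD'.nonneg j).2)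
    (fun i => hf.dDelta_map_le hp hK hmaps (hD.nonneg i).1 (hD.nonneg i).2)
    (fun j => hf.dDelta_map_le hp hK hmaps (hD'.nonneg j).1 (hD'.nonneg j).2)

end Reparam

theorem wasserstein_reparam_deriv_lipschitz_general
    (p : ℝ≥0∞) (hp : 1 ≤ p) (F F' : ℝ → ℝ)
    (hmono : StrictMonoOn F (Set.Ici (0 : ℝ)))
    (hbij : Set.BijOn F (Set.Ici (0 : ℝ)) (Set.Ici (0 : ℝ)))
    (hderiv : ∀ t ∈ Set.Ici (0 : ℝ), HasDerivAt F (F' t) t)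
    (hbdd : BddAbove (F' '' Set.Ici (0 : ℝ)))
    (D D' : PD) (hD : D.valid) (hD' : D'.valid) :
    Wdist p (D.map F) (D'.map F)
      ≤ ENNReal.ofReal (sSup (F' '' Set.Ici (0 : ℝ))) * Wdist p D D' := by
  have hlip : LipschitzOnWith (sSup (F' '' Ici 0)).toNNReal F (Ici (0 : ℝ)) :=
    hmono.monotoneOn.lipschitzOnWith_of_hasDerivAt_le (convex_Ici 0) hderiv
      fun t ht => (le_csSup hbdd (mem_image_of_mem F' ht)).trans (Real.le_coe_toNNReal _)
  have hK : (sSup (F' '' Ici 0)).toNNReal ≠ 0 :=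
    hlip.ne_zero_of_injOn hbij.injOn ⟨0, self_mem_Ici, 1, mem_Ici.2 zero_le_one, zero_ne_one⟩
  -- `ENNReal.ofReal L` is by definition `↑L.toNNReal`
  exact hlip.Wdist_map_le (zero_lt_one.trans_le hp).ne' hK hbij.mapsTo hD hD'

/-- If `F : ℝ≥0 → ℝ≥0` is an increasing bijection which is continuous and
differentiable with bounded derivative, then for all persistence diagrams `D, D'` one has
`W_p(F(D), F(D')) ≤ (sup F') · W_p(D, D')`. -/
theorem wasserstein_reparam_deriv_lipschitz
    (p : ℝ≥0∞) (hp : 1 ≤ p) (F F' : ℝ → ℝ)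
    (hmono : StrictMonoOn F (Set.Ici (0 : ℝ)))
    (hbij : Set.BijOn F (Set.Ici (0 : ℝ)) (Set.Ici (0 : ℝ)))
    (hcont : ContinuousOn F (Set.Ici (0 : ℝ)))
    (hderiv : ∀ t ∈ Set.Ici (0 : ℝ), HasDerivAt F (F' t) t)
    (hbdd : BddAbove (F' '' Set.Ici (0 : ℝ)))
    (D D' : PD) (hD : D.valid) (hD' : D'.valid) :
    Wdist p (D.map F) (D'.map F)
      ≤ ENNReal.ofReal (sSup (F' '' Set.Ici (0 : ℝ))) * Wdist p D D' :=
  wasserstein_reparam_deriv_lipschitz_general p hp F F' hmono hbij hderiv hbdd D D' hD hD'
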